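/- arXiv:2311.14579 — 4 statements merged into one kernel-verified Lean document; each statement's English description precedes it below -/
import Mathlib

section
/- Let Q be a finite τ-structure with universe V and free set F ⊆ V, let Q_c be a core of color(Q), i.e., a minimal substructure of color(Q) admitting a homomorphism from color(Q), and let Q' be the τ-reduct of Q_c (the structure obtained from Q_c by forgetting the color relations r_x). Then F is contained in the universe of Q' and, for every τ-structure D, the answer sets coincide: {h↾F : h a τ-homomorphism Q → D} = {h↾F : h a τ-homomorphism Q' → D}. -/
/-- A relational structure over vocabulary `σ` with arities `ar`, on universe `V`. -/
structure RelStr (σ : Type) (ar : σ → ℕ) (V : Type) where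
  rel : ∀ r : σ, Set ((Fin (ar r)) → V)

/-- `f` is a homomorphism from `Q₁` to `Q₂`. -/
def IsHom {σ : Type} {ar : σ → ℕ} {A B : Type}
    (Q₁ : RelStr σ ar A) (Q₂ : RelStr σ ar B) (f : A → B) : Prop :=
  ∀ r t, t ∈ Q₁.rel r → (f ∘ t) ∈ Q₂.rel r

/-- `(U, S)` is a substructure of `Q` (whose universe is all of `V`):
its relations are contained in those of `Q` and all its tuples lie in `U`. -/
def SubOf {σ : Type} {ar : σ → ℕ} {V : Type} (Q : RelStr σ ar V)
    (U : Set V) (S : RelStr σ ar V) : Prop :=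
  (∀ r, S.rel r ⊆ Q.rel r) ∧ (∀ r t, t ∈ S.rel r → ∀ i, t i ∈ U)

/-- There is a homomorphism from `Q` into the substructure `(U, S)`. -/
def HomTo {σ : Type} {ar : σ → ℕ} {V : Type} (Q : RelStr σ ar V)
    (U : Set V) (S : RelStr σ ar V) : Prop :=
  ∃ f : V → V, (∀ a, f a ∈ U) ∧ IsHom Q S f

/-- `(U, S)` is a core of `Q`: a minimal substructure of `Q` admitting a
homomorphism from `Q`. -/
def IsCoreOf {σ : Type} {ar : σ → ℕ} {V : Type} (Q : RelStr σ ar V)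
    (U : Set V) (S : RelStr σ ar V) : Prop :=
  SubOf Q U S ∧ HomTo Q U S ∧
    ∀ (U' : Set V) (S' : RelStr σ ar V), SubOf Q U' S' → HomTo Q U' S' →
      U' ⊆ U → (∀ r, S'.rel r ⊆ S.rel r) → U' = U ∧ S' = S

/-- Arities for the colored vocabulary `σ ⊕ F` (fresh unary symbols for `F`). -/
abbrev colorAr {σ : Type} (ar : σ → ℕ) {V : Type} (F : Set V) : σ ⊕ ↥F → ℕ :=
  Sum.elim ar fun _ => 1

/-- The coloring of `Q` with respect to the free set `F`. -/
def color {σ : Type} {ar : σ → ℕ} {V : Type} (Q : RelStr σ ar V) (F : Set V) :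
    RelStr (σ ⊕ ↥F) (colorAr ar F) V where
  rel := fun r =>
    match r with
    | Sum.inl s => Q.rel s
    | Sum.inr x => {t | ∀ i, t i = (x : V)}

/-- The τ-reduct of a structure over the colored vocabulary: forget the color relations. -/
def reduct {σ : Type} {ar : σ → ℕ} {V : Type} {F : Set V}
    (S : RelStr (σ ⊕ ↥F) (colorAr ar F) V) : RelStr σ ar V where
  rel := fun r => S.rel (Sum.inl r)

/-- If `(Uc, Sc)` is a core of `color(Q)` and `Q'` is its τ-reduct, then `F` is
contained in the universe `Uc` of `Q'`, and for every τ-structure `D` the answer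
sets of `Q` and `Q'` with respect to `F` coincide. -/
theorem stmt5 {σ : Type} {ar : σ → ℕ} {V : Type} [Fintype σ] [Fintype V]
    (Q : RelStr σ ar V) (F : Set V)
    (Uc : Set V) (Sc : RelStr (σ ⊕ ↥F) (colorAr ar F) V)
    (hcore : IsCoreOf (color Q F) Uc Sc)
    {W : Type} (D : RelStr σ ar W) :
    F ⊆ Uc ∧
      {g : ↥F → W | ∃ h : V → W, IsHom Q D h ∧ ∀ x : ↥F, g x = h x} =
        {g : ↥F → W | ∃ h : V → W, IsHom (reduct Sc) D h ∧ ∀ x : ↥F, g x = h x} := by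
  obtain ⟨⟨hsub, htup⟩, ⟨f, hfU, hfhom⟩, _⟩ := hcore
  -- f fixes elements of F
  have hfix : ∀ x : ↥F, f (x : V) = (x : V) := by
    intro x
    have ht : (fun _ : Fin 1 => (x : V)) ∈ (color Q F).rel (Sum.inr x) := by
      intro i; rfl
    have h2 := hfhom (Sum.inr x) _ ht
    have h3 := hsub (Sum.inr x) h2 (0 : Fin 1)
    exact h3
  have hFU : F ⊆ Uc := by
    intro x hx
    have := hfU x
    rwa [hfix ⟨x, hx⟩] at this
  refine ⟨hFU, ?_⟩
  ext g
  constructor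
  · rintro ⟨h, hhom, hres⟩
    exact ⟨h, fun r t ht => hhom r t (hsub (Sum.inl r) ht), hres⟩
  · rintro ⟨h, hhom, hres⟩
    refine ⟨h ∘ f, fun r t ht => hhom r (f ∘ t) (hfhom (Sum.inl r) t ht), ?_⟩
    intro x
    simp [Function.comp, hfix x, hres x]
end

section
/- Let Q be a finite τ-structure with universe V and free set F ⊆ V such that color(Q) is a core, and let B be a finite structure over the vocabulary τ ∪ {r_X : X ∈ V} with universe B. Define D = {(X, b) ∈ V × B : b ∈ r_X^B}, and let 𝔇 be the τ-structure with universe D in which, for each ρ-ary r ∈ τ, r^𝔇 = {((X₁,b₁),…,(X_ρ,b_ρ)) ∈ D^ρ : (X₁,…,X_ρ) ∈ r^Q and (b₁,…,b_ρ) ∈ r^B}. Let π₁ : D → V be the first projection, let fullcolor(Q)(B) = {ĥ↾F : ĥ : V → B is a τ-homomorphism Q → B with ĥ(X) ∈ r_X^B for every X ∈ V}, and let N = {h : F → D : π₁ ∘ h = id_F and h extends to a τ-homomorphism Q → 𝔇}. Then the map sending h* ∈ fullcolor(Q)(B) to the function x ↦ (x, h*(x)) is a bijection from fullcolor(Q)(B)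 onto N; in particular |fullcolor(Q)(B)| = |N|. -/
/-- `Q` (whose universe is the whole type `V`) is a core: there is no homomorphism
from `Q` to a proper substructure `(U, S)` of `Q`. -/
def IsCore {σ : Type} {ar : σ → ℕ} {V : Type} (Q : RelStr σ ar V) : Prop :=
  ¬ ∃ (U : Set V) (S : RelStr σ ar V) (f : V → V),
      (∀ r, S.rel r ⊆ Q.rel r) ∧
      (∀ r t, t ∈ S.rel r → ∀ i, t i ∈ U) ∧
      (U ≠ Set.univ ∨ S ≠ Q) ∧
      (∀ a, f a ∈ U) ∧ IsHom Q S f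

/-- Arities for the vocabulary `σ ⊕ V` with a fresh unary symbol `r_X` for every `X ∈ V`. -/
abbrev fullAr {σ : Type} (ar : σ → ℕ) (V : Type) : σ ⊕ V → ℕ :=
  Sum.elim ar fun _ => 1

section Setup

variable {σ : Type} {ar : σ → ℕ} {V B : Type}

/-- The domain `D = {(X, b) ∈ V × B : b ∈ r_X^B}`. -/
def Dset (Bst : RelStr (σ ⊕ V) (fullAr ar V) B) : Set (V × B) :=
  {p | (fun _ : Fin 1 => p.2) ∈ Bst.rel (Sum.inr p.1)}

/-- The τ-structure `𝔇` over `D ⊆ V × B` with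
`r^𝔇 = {((X₁,b₁),…) ∈ D^ρ : (X₁,…) ∈ r^Q and (b₁,…) ∈ r^B}`. -/
def bigD (Q : RelStr σ ar V) (Bst : RelStr (σ ⊕ V) (fullAr ar V) B) :
    RelStr σ ar (V × B) where
  rel := fun r => {t | (∀ i, t i ∈ Dset Bst) ∧
    (fun i => (t i).1) ∈ Q.rel r ∧ (fun i => (t i).2) ∈ Bst.rel (Sum.inl r)}

/-- The τ-reduct of `B`. -/
def tauReduct (Bst : RelStr (σ ⊕ V) (fullAr ar V) B) : RelStr σ ar B where
  rel := fun r => Bst.rel (Sum.inl r)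

/-- `fullcolor(Q)(B)`: the restrictions to `F` of τ-homomorphisms `hh : Q → B`
satisfying `hh(X) ∈ r_X^B` for every variable `X ∈ V`. -/
def FCset (Q : RelStr σ ar V) (F : Set V)
    (Bst : RelStr (σ ⊕ V) (fullAr ar V) B) : Set (↥F → B) :=
  {g | ∃ hh : V → B, IsHom Q (tauReduct Bst) hh ∧
    (∀ X : V, (fun _ : Fin 1 => hh X) ∈ Bst.rel (Sum.inr X)) ∧
    ∀ x : ↥F, g x = hh x}

/-- `N`: the functions `h : F → D` with `π₁ ∘ h = id_F` which extend to a
τ-homomorphism from `Q` to `𝔇`. -/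
def Nset (Q : RelStr σ ar V) (F : Set V)
    (Bst : RelStr (σ ⊕ V) (fullAr ar V) B) : Set (↥F → V × B) :=
  {h | (∀ x : ↥F, h x ∈ Dset Bst) ∧ (∀ x : ↥F, (h x).1 = (x : V)) ∧
    ∃ h' : V → V × B, (∀ v, h' v ∈ Dset Bst) ∧ IsHom Q (bigD Q Bst) h' ∧
      ∀ x : ↥F, h' (x : V) = h x}

end Setup


private lemma iterHom {σ : Type} {ar : σ → ℕ} {V : Type} {Q : RelStr σ ar V}
    {g : V → V} (hg : IsHom Q Q g) : ∀ n, IsHom Q Q (g^[n]) := by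
  intro n
  induction n with
  | zero => intro r t ht; simpa [Function.comp] using ht
  | succ n ih =>
      intro r t ht
      have h2 := hg r _ (ih r t ht)
      rw [Function.iterate_succ']
      simpa [Function.comp_assoc] using h2

private lemma iterFix {V : Type} {g : V → V} {x : V} (hx : g x = x) :
    ∀ n, g^[n] x = x := by
  intro n
  induction n with
  | zero => rfl
  | succ n ih => rw [Function.iterate_succ', Function.comp_apply, ih, hx]

private lemma exists_iterate_id {V : Type} [Fintype V] {g : V → V}
    (hg : Function.Surjective g) : ∃ n, 1 ≤ n ∧ g^[n] = id := by
  have hb : Function.Bijective g := ⟨Finite.injective_iff_surjective.mpr hg, hg⟩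
  let e : Equiv.Perm V := Equiv.ofBijective g hb
  refine ⟨orderOf e, orderOf_pos e, ?_⟩
  have h1 : e ^ orderOf e = 1 := pow_orderOf_eq_one e
  funext x
  have h2 : (e ^ orderOf e) x = x := by rw [h1]; rfl
  rw [Equiv.Perm.coe_pow] at h2
  exact h2

/-- The map `h* ↦ (x ↦ (x, h*(x)))` is a bijection from `fullcolor(Q)(B)` onto `N`;
in particular the two sets have the same cardinality. -/
theorem stmt6 {σ : Type} {ar : σ → ℕ} {V B : Type} [Fintype σ] [Fintype V] [Fintype B]
    (Q : RelStr σ ar V) (F : Set V) (hcore : IsCore (color Q F))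
    (Bst : RelStr (σ ⊕ V) (fullAr ar V) B) :
    Set.BijOn (fun (g : ↥F → B) (x : ↥F) => ((x : V), g x))
        (FCset Q F Bst) (Nset Q F Bst) ∧
      (FCset Q F Bst).ncard = (Nset Q F Bst).ncard := by
  have hbij : Set.BijOn (fun (g : ↥F → B) (x : ↥F) => ((x : V), g x))
      (FCset Q F Bst) (Nset Q F Bst) := by
    refine ⟨?_, ?_, ?_⟩
    · -- MapsTo
      rintro g ⟨hh, hhom, hcol, hgx⟩
      refine ⟨?_, fun x => rfl, ?_⟩
      · intro x
        show (fun _ : Fin 1 => g x) ∈ Bst.rel (Sum.inr (x : V))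
        rw [show g x = hh (x : V) from hgx x]
        exact hcol x
      · refine ⟨fun v => (v, hh v), fun v => hcol v, ?_, ?_⟩
        · intro r t ht
          refine ⟨fun i => hcol (t i), ht, hhom r t ht⟩
        · intro x
          exact Prod.ext rfl (hgx x).symm
    · -- InjOn
      intro g1 _ g2 _ heq
      funext x
      have := congrFun heq x
      exact (Prod.mk.injEq _ _ _ _).mp this |>.2
    · -- SurjOn
      rintro h ⟨hD, hfst, h', hDall, hhom', hF⟩
      set g : V → V := fun v => (h' v).1 with hgdef
      -- g is a τ-homomorphism Q → Q
      have hgQ : IsHom Q Q g := by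
        intro r t ht
        exact (hhom' r t ht).2.1
      -- g fixes F
      have hgF : ∀ x : ↥F, g (x : V) = (x : V) := by
        intro x
        show (h' (x : V)).1 = (x : V)
        rw [hF x]; exact hfst x
      -- g is surjective, by the core property
      have hsurj : Function.Surjective g := by
        by_contra hns
        apply hcore
        refine ⟨Set.range g,
          ⟨fun r => {t | ∃ s ∈ (color Q F).rel r, t = g ∘ s}⟩, g, ?_, ?_, ?_, ?_, ?_⟩
        · rintro r t ⟨s, hs, rfl⟩
          match r with
          | Sum.inl r0 => exact hgQ r0 s hs
          | Sum.inr x =>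
              intro i
              show g (s i) = (x : V)
              rw [hs i, hgF x]
        · rintro r t ⟨s, hs, rfl⟩ i
          exact ⟨s i, rfl⟩
        · left
          intro hU
          exact hns (Set.range_eq_univ.mp hU)
        · intro a; exact ⟨a, rfl⟩
        · intro r t ht
          exact ⟨t, ht, rfl⟩
      obtain ⟨n, hn1, hnid⟩ := exists_iterate_id hsurj
      set gi : V → V := g^[n - 1] with hgidef
      have hgiQ : IsHom Q Q gi := iterHom hgQ (n - 1)
      have hgiF : ∀ x : ↥F, gi (x : V) = (x : V) := fun x => iterFix (hgF x) (n - 1)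
      have hkey : g ∘ gi = g^[n] := by
        rw [hgidef, ← Function.iterate_succ']
        have : (n - 1).succ = n := by omega
        rw [this]
      have hggi : ∀ v, g (gi v) = v := by
        intro v
        have h1 : (g ∘ gi) v = g^[n] v := congrFun hkey v
        rw [hnid] at h1
        exact h1
      -- the homomorphism Q → B
      set hh : V → B := fun v => (h' (gi v)).2 with hhdef
      have hhD : ∀ v, h' (gi v) ∈ Dset Bst := fun v => hDall (gi v)
      refine ⟨fun x => (h x).2, ⟨hh, ?_, ?_, ?_⟩, ?_⟩
      · -- hh is a τ-homomorphism
        intro r t ht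
        have h1 := hhom' r _ (hgiQ r t ht)
        exact h1.2.2
      · -- hh X ∈ r_X
        intro X
        have h1 : (fun _ : Fin 1 => (h' (gi X)).2) ∈ Bst.rel (Sum.inr (h' (gi X)).1) :=
          hhD X
        have h2 : (h' (gi X)).1 = X := hggi X
        rwa [h2] at h1
      · -- restriction to F
        intro x
        show (h x).2 = (h' (gi (x : V))).2
        rw [hgiF x, hF x]
      · -- the image is h
        funext x
        exact Prod.ext (hfst x).symm rfl
  refine ⟨hbij, ?_⟩
  rw [← hbij.image_eq, Set.ncard_image_of_injOn hbij.injOn]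
end

section
/- Let Q be a finite τ-structure with universe V and free set F ⊆ V such that color(Q) is a core, let B be a finite structure over τ ∪ {r_X : X ∈ V}, and let 𝔇 be the τ-structure with universe D = {(X,b) ∈ V × B : b ∈ r_X^B} and relations r^𝔇 = {((X₁,b₁),…,(X_ρ,b_ρ)) ∈ D^ρ : (X₁,…,X_ρ) ∈ r^Q and (b₁,…,b_ρ) ∈ r^B}, with first projection π₁ : D → V. Let N = {h : F → D : π₁ ∘ h = id_F and h extends to a τ-homomorphism Q → 𝔇}, let N' = {h : F → D : (π₁ ∘ h)(F) = F and h extends to a τ-homomorphism Q → 𝔇}, and let I = {g : F → F : g extends to an automorphism of Q}. Then N' = {f ∘ g : f ∈ N, g ∈ I}. -/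
/-- `g' : V → V` is an automorphism of `Q`: a bijective homomorphism whose inverse
is also a homomorphism. -/
def IsAut {σ : Type} {ar : σ → ℕ} {V : Type} (Q : RelStr σ ar V) (g' : V → V) : Prop :=
  Function.Bijective g' ∧ IsHom Q Q g' ∧
    ∃ g'' : V → V, (∀ x, g'' (g' x) = x) ∧ (∀ x, g' (g'' x) = x) ∧ IsHom Q Q g''

/-- `I`: the maps `g : F → F` extending to an automorphism of `Q`. -/
def Iset {σ : Type} {ar : σ → ℕ} {V : Type} (Q : RelStr σ ar V) (F : Set V) :
    Set (↥F → ↥F) :=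
  {g | ∃ g' : V → V, IsAut Q g' ∧ ∀ x : ↥F, g' (x : V) = (g x : V)}

/-- `N'`: the functions `h : F → D` with `(π₁ ∘ h)(F) = F` which extend to a
τ-homomorphism from `Q` to `𝔇`. -/
def N'set {σ : Type} {ar : σ → ℕ} {V B : Type} (Q : RelStr σ ar V) (F : Set V)
    (Bst : RelStr (σ ⊕ V) (fullAr ar V) B) : Set (↥F → V × B) :=
  {h | (∀ x : ↥F, h x ∈ Dset Bst) ∧
    (Set.range fun x : ↥F => (h x).1) = F ∧
    ∃ h' : V → V × B, (∀ v, h' v ∈ Dset Bst) ∧ IsHom Q (bigD Q Bst) h' ∧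
      ∀ x : ↥F, h' (x : V) = h x}


/-!
Let `h ∈ N'` extend to `h' : Q → 𝔇`. Then `p = π₁ ∘ h'` is an endomorphism of `Q` permuting `F`,
so some iterate `p^[d]` fixes `F` pointwise, i.e. is an endomorphism of `color(Q)`. Since
`color(Q)` is a core, `p^[d]` is onto, hence so is `p`; on a finite structure a bijective
endomorphism is an automorphism (its inverse is again an iterate). Writing `g = p↾F` and
`f = h ∘ g⁻¹` exhibits `h = f ∘ g` with `f ∈ N`, `g ∈ I`. Conversely, for `f ∈ N` and
`g ∈ I` the map `g` permutes the finite set `F`, so `π₁ ∘ f ∘ g = g` has range `F`.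
-/

section Structures

variable {σ : Type} {ar : σ → ℕ}

theorem IsHom.comp {A B C : Type} {Q₁ : RelStr σ ar A} {Q₂ : RelStr σ ar B}
    {Q₃ : RelStr σ ar C} {f : A → B} {g : B → C}
    (hg : IsHom Q₂ Q₃ g) (hf : IsHom Q₁ Q₂ f) : IsHom Q₁ Q₃ (g ∘ f) :=
  fun r t ht => hg r (f ∘ t) (hf r t ht)

theorem IsHom.iterate {V : Type} {Q : RelStr σ ar V} {p : V → V} (hp : IsHom Q Q p) :
    ∀ n, IsHom Q Q (p^[n])
  | 0 => fun _ _ ht => ht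
  | n + 1 => (hp.iterate n).comp hp

theorem isHom_fst_bigD {V B : Type} (Q : RelStr σ ar V)
    (Bst : RelStr (σ ⊕ V) (fullAr ar V) B) : IsHom (bigD Q Bst) Q Prod.fst :=
  fun _ _ ht => ht.2.1

theorem isAut_of_bijective {V : Type} [Finite V] {Q : RelStr σ ar V} {p : V → V}
    (hp : IsHom Q Q p) (hbij : Function.Bijective p) : IsAut Q p := by
  have := Fintype.ofFinite V
  obtain ⟨n, hn⟩ : ∃ n, p^[n + 1] = id :=
    ⟨(Fintype.card V).factorial - 1, by
      rw [Nat.sub_add_cancel (Nat.factorial_pos _)]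
      exact Function.injective_iff_iterate_factorial_card_eq_id.mp hbij.1⟩
  refine ⟨hbij, hp, p^[n], fun x => ?_, fun x => ?_, hp.iterate n⟩
  · rw [← Function.iterate_succ_apply, hn, id]
  · rw [← Function.iterate_succ_apply' p n, hn, id]

/-- An endomorphism of `Q` fixing `F` pointwise is an endomorphism of `color Q F`; if it were not
onto, its image would be a proper substructure of `color Q F` receiving a homomorphism. -/
theorem IsCore.surjective_of_isHom {V : Type} {Q : RelStr σ ar V} {F : Set V}
    (hcore : IsCore (color Q F)) {q : V → V} (hq : IsHom Q Q q) (hfix : ∀ x ∈ F, q x = x) :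
    Function.Surjective q := by
  by_contra hns
  apply hcore
  refine ⟨Set.range q, ⟨fun r => (q ∘ ·) '' (color Q F).rel r⟩, q, ?_, ?_, ?_,
    fun a => ⟨a, rfl⟩, fun r t ht => ⟨t, ht, rfl⟩⟩
  · rintro (s | x) _ ⟨t, ht, rfl⟩
    · exact hq s t ht
    · intro i
      change q (t i) = x
      rw [ht i, hfix x x.2]
  · rintro r _ ⟨t, -, rfl⟩ i
    exact ⟨t i, rfl⟩
  · exact Or.inl fun hU => hns (Set.range_eq_univ.mp hU)

theorem IsCore.isAut_of_surjOn {V : Type} [Finite V] {Q : RelStr σ ar V} {F : Set V}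
    (hcore : IsCore (color Q F)) {p : V → V} (hp : IsHom Q Q p) (hmaps : Set.MapsTo p F F)
    (hsurj : Set.SurjOn p F F) : IsAut Q p := by
  have := Fintype.ofFinite F
  have hperm : Function.Injective (hmaps.restrict p F F) :=
    Finite.injective_iff_surjective.mpr (hmaps.restrict_surjective_iff.mpr hsurj)
  set d := (Fintype.card F).factorial - 1
  have hfix : ∀ x ∈ F, p^[d + 1] x = x := fun x hx => by
    have hid := Function.injective_iff_iterate_factorial_card_eq_id.mp hperm
    rw [← Nat.sub_add_cancel (Nat.factorial_pos _), hmaps.iterate_restrict] at hid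
    exact congrArg Subtype.val (congrFun hid ⟨x, hx⟩)
  have hpd : Function.Surjective (p ∘ p^[d]) := by
    rw [← Function.iterate_succ']
    exact hcore.surjective_of_isHom (hp.iterate _) hfix
  exact isAut_of_bijective hp (Finite.surjective_iff_bijective.mp hpd.of_comp)

end Structures

section Sets

variable {σ : Type} {ar : σ → ℕ} {V B : Type} {Q : RelStr σ ar V} {F : Set V}
  {Bst : RelStr (σ ⊕ V) (fullAr ar V) B}

theorem comp_mem_N'set [Finite F] {f : F → V × B} {g : F → F} (hf : f ∈ Nset Q F Bst)
    (hg : g ∈ Iset Q F) : f ∘ g ∈ N'set Q F Bst := by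
  obtain ⟨hfD, hfid, f', hf'D, hf'hom, hf'ext⟩ := hf
  obtain ⟨g', ⟨hg'bij, hg'hom, -⟩, hg'ext⟩ := hg
  have hgsurj : Function.Surjective g := Finite.injective_iff_surjective.mp fun a b hab =>
    Subtype.ext (hg'bij.1 (by rw [hg'ext a, hg'ext b, hab]))
  refine ⟨fun x => hfD _, ?_, f' ∘ g', fun v => hf'D _, hf'hom.comp hg'hom, fun x => ?_⟩
  · calc Set.range (fun x => ((f ∘ g) x).1)
        = Set.range (Subtype.val ∘ g) := congrArg Set.range (funext fun x => hfid (g x))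
      _ = F := by rw [hgsurj.range_comp, Subtype.range_coe]
  · simp only [Function.comp_apply, hg'ext x, hf'ext (g x)]

theorem IsCore.exists_mem_Nset_mem_Iset_of_mem_N'set [Finite V] (hcore : IsCore (color Q F))
    {h : F → V × B} (hh : h ∈ N'set Q F Bst) :
    ∃ f ∈ Nset Q F Bst, ∃ g ∈ Iset Q F, h = f ∘ g := by
  obtain ⟨hD, hrange, h', hD', hhom', hext⟩ := hh
  set p := Prod.fst ∘ h'
  have hpF : ∀ x : F, p x = (h x).1 := fun x => congrArg Prod.fst (hext x)
  have hmaps : Set.MapsTo p F F := fun x hx => by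
    rw [hpF ⟨x, hx⟩]
    exact hrange.subset ⟨⟨x, hx⟩, rfl⟩
  have hsurj : Set.SurjOn p F F := fun y hy => by
    rw [← hrange] at hy
    obtain ⟨x, rfl⟩ := hy
    exact ⟨x, x.2, hpF x⟩
  have haut := hcore.isAut_of_surjOn ((isHom_fst_bigD Q Bst).comp hhom') hmaps hsurj
  obtain ⟨pinv, hleft, hright, hpinv⟩ := haut.2.2
  have hpinvmaps : Set.MapsTo pinv F F := fun y hy => by
    obtain ⟨x, hx, rfl⟩ := hsurj hy
    rwa [hleft]
  refine ⟨h ∘ hpinvmaps.restrict pinv F F, ⟨fun x => hD _, fun x => ?_, h' ∘ pinv,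
      fun v => hD' _, hhom'.comp hpinv, fun x => hext ⟨pinv x, hpinvmaps x.2⟩⟩,
    hmaps.restrict p F F, ⟨p, haut, fun x => rfl⟩, funext fun x => ?_⟩
  · rw [Function.comp_apply, ← hpF]
    exact hright x
  · exact congrArg h (Subtype.ext (hleft x).symm)

end Sets

theorem stmt7_general {σ : Type} {ar : σ → ℕ} {V B : Type} [Fintype V]
    (Q : RelStr σ ar V) (F : Set V) (hcore : IsCore (color Q F))
    (Bst : RelStr (σ ⊕ V) (fullAr ar V) B) :
    N'set Q F Bst =
      {h : ↥F → V × B | ∃ f ∈ Nset Q F Bst, ∃ g ∈ Iset Q F, h = f ∘ g} := by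
  refine Set.Subset.antisymm (fun h hh => hcore.exists_mem_Nset_mem_Iset_of_mem_N'set hh) ?_
  rintro _ ⟨f, hf, g, hg, rfl⟩
  exact comp_mem_N'set hf hg

/-- If `color(Q)` is a core, then `N' = {f ∘ g : f ∈ N, g ∈ I}`. -/
theorem stmt7 {σ : Type} {ar : σ → ℕ} {V B : Type} [Fintype σ] [Fintype V] [Fintype B]
    (Q : RelStr σ ar V) (F : Set V) (hcore : IsCore (color Q F))
    (Bst : RelStr (σ ⊕ V) (fullAr ar V) B) :
    N'set Q F Bst =
      {h : ↥F → V × B | ∃ f ∈ Nset Q F Bst, ∃ g ∈ Iset Q F, h = f ∘ g} :=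
  stmt7_general Q F hcore Bst
end

section
/- Let Q be a finite τ-structure with universe V and free set F ⊆ V such that color(Q) is a core, let B be a finite structure over τ ∪ {r_X : X ∈ V}, and let 𝔇 be the τ-structure with universe D = {(X,b) ∈ V × B : b ∈ r_X^B} and relations r^𝔇 = {((X₁,b₁),…,(X_ρ,b_ρ)) ∈ D^ρ : (X₁,…,X_ρ) ∈ r^Q and (b₁,…,b_ρ) ∈ r^B}, with first projection π₁ : D → V. Let fullcolor(Q)(B) = {ĥ↾F : ĥ : V → B is a τ-homomorphism Q → B with ĥ(X) ∈ r_X^B for every X ∈ V}, let N' = {h : F → D : (π₁ ∘ h)(F) = F and h extends to a τ-homomorphism Q → 𝔇}, and let I = {g : F → F : g extends to an automorphism of Q}. Then |I| · |fullcolor(Q)(B)| = |N'|. -/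
section AuxProof

variable {σ : Type} {ar : σ → ℕ} {V B : Type}

lemma isHom_comp {A₁ A₂ A₃ : Type} {Q₁ : RelStr σ ar A₁} {Q₂ : RelStr σ ar A₂}
    {Q₃ : RelStr σ ar A₃} {f : A₁ → A₂} {g : A₂ → A₃}
    (hf : IsHom Q₁ Q₂ f) (hg : IsHom Q₂ Q₃ g) : IsHom Q₁ Q₃ (g ∘ f) := by
  intro r t ht
  have := hg r (f ∘ t) (hf r t ht)
  simpa [Function.comp_assoc] using this

lemma isHom_iterate {Q : RelStr σ ar V} {e : V → V} (he : IsHom Q Q e) :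
    ∀ n, IsHom Q Q e^[n]
  | 0 => by intro r t ht; simpa using ht
  | n + 1 => by
    rw [Function.iterate_succ']
    exact isHom_comp (isHom_iterate he n) he

/-- Key consequence of coreness: a homomorphism `Q → Q` mapping `F` onto `F`
is an automorphism of `Q`. -/
lemma core_aut [Fintype V] {Q : RelStr σ ar V} {F : Set V}
    (hcore : IsCore (color Q F)) {e : V → V} (he : IsHom Q Q e)
    (hmapsto : ∀ x : ↥F, e x ∈ F) (hsurj : ∀ y ∈ F, ∃ x ∈ F, e x = y) :
    IsAut Q e := by
  classical
  let gF : ↥F → ↥F := fun x => ⟨e x, hmapsto x⟩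
  have hgFsurj : Function.Surjective gF := by
    rintro ⟨y, hy⟩
    obtain ⟨x, hx, hex⟩ := hsurj y hy
    exact ⟨⟨x, hx⟩, Subtype.ext hex⟩
  have hgFbij : Function.Bijective gF := Finite.surjective_iff_bijective.mp hgFsurj
  let P : Equiv.Perm ↥F := Equiv.ofBijective gF hgFbij
  have hkpos : 0 < orderOf P := orderOf_pos P
  set k := orderOf P with hk
  have hiter : ∀ (n : ℕ) (x : V) (hx : x ∈ F), e^[n] x = ((P ^ n) ⟨x, hx⟩ : V) := by
    intro n
    induction n with
    | zero => intro x hx; simp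
    | succ n ih =>
      intro x hx
      rw [Function.iterate_succ_apply, ih (e x) (hmapsto ⟨x, hx⟩)]
      have : (P ^ (n + 1)) ⟨x, hx⟩ = (P ^ n) ⟨e x, hmapsto ⟨x, hx⟩⟩ := by
        rw [pow_succ, Equiv.Perm.mul_apply]
        rfl
      rw [this]
  have hfix : ∀ x ∈ F, e^[k] x = x := by
    intro x hx
    rw [hiter k x hx, hk, pow_orderOf_eq_one]
    rfl
  have hcolorhom : IsHom (color Q F) (color Q F) e^[k] := by
    intro r t ht
    cases r with
    | inl s => exact isHom_iterate he k s t ht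
    | inr x =>
      intro i
      have hti : t i = (x : V) := ht i
      show e^[k] (t i) = (x : V)
      rw [hti, hfix _ x.2]
  have hsurjk : Function.Surjective e^[k] := by
    by_contra hns
    apply hcore
    refine ⟨Set.range e^[k], ⟨fun r => (fun t => e^[k] ∘ t) '' ((color Q F).rel r)⟩,
      e^[k], ?_, ?_, ?_, fun a => ⟨a, rfl⟩, fun r t ht => ⟨t, ht, rfl⟩⟩
    · rintro r t ⟨s, hs, rfl⟩
      exact hcolorhom r s hs
    · rintro r t ⟨s, hs, rfl⟩ i
      exact ⟨s i, rfl⟩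
    · exact Or.inl fun hU => hns (Set.range_eq_univ.mp hU)
  have hesurj : Function.Surjective e := by
    have hk1 : k - 1 + 1 = k := by omega
    have hks : e^[k] = e ∘ e^[k - 1] := by
      conv_lhs => rw [← hk1, Function.iterate_succ']
    rw [hks] at hsurjk
    exact hsurjk.of_comp
  have hebij : Function.Bijective e := Finite.surjective_iff_bijective.mp hesurj
  let E : Equiv.Perm V := Equiv.ofBijective e hebij
  have hmpos : 0 < orderOf E := orderOf_pos E
  set m := orderOf E with hm
  have hEiter : ∀ (n : ℕ) (x : V), (E ^ n) x = e^[n] x := by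
    intro n
    induction n with
    | zero => intro x; simp
    | succ n ih =>
      intro x
      rw [Function.iterate_succ_apply, pow_succ, Equiv.Perm.mul_apply, ← ih (e x)]
      rfl
  have hmfix : ∀ x, e^[m] x = x := by
    intro x
    rw [← hEiter m x, hm, pow_orderOf_eq_one]
    rfl
  have hm1 : m - 1 + 1 = m := by omega
  refine ⟨hebij, he, e^[m - 1], ?_, ?_, isHom_iterate he (m - 1)⟩
  · intro x
    have h1 : e^[m - 1] (e x) = e^[(m - 1) + 1] x := (Function.iterate_succ_apply e (m - 1) x).symm
    rw [h1, hm1, hmfix]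
  · intro x
    have h1 : e (e^[m - 1] x) = e^[(m - 1) + 1] x := (Function.iterate_succ_apply' e (m - 1) x).symm
    rw [h1, hm1, hmfix]

lemma phi_mem [Fintype V] {Q : RelStr σ ar V} {F : Set V}
    {Bst : RelStr (σ ⊕ V) (fullAr ar V) B}
    {g : ↥F → ↥F} (hg : g ∈ Iset Q F) {f : ↥F → B} (hf : f ∈ FCset Q F Bst) :
    (fun x : ↥F => ((g x : V), f (g x))) ∈ N'set Q F Bst := by
  obtain ⟨g', hg'aut, hg'ext⟩ := hg
  obtain ⟨hh, hhhom, hhcol, hhext⟩ := hf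
  have hgbij : Function.Bijective g := by
    refine Finite.injective_iff_bijective.mp ?_
    intro x y hxy
    have : g' x = g' y := by rw [hg'ext x, hg'ext y, hxy]
    exact Subtype.ext (hg'aut.1.1 this)
  set h' : V → V × B := fun v => (g' v, hh (g' v)) with hh'def
  have hD : ∀ v, h' v ∈ Dset Bst := fun v => hhcol (g' v)
  have hhomD : IsHom Q (bigD Q Bst) h' := by
    intro r t ht
    refine ⟨fun i => hD (t i), hg'aut.2.1 r t ht, ?_⟩
    exact hhhom r (g' ∘ t) (hg'aut.2.1 r t ht)
  have hext : ∀ x : ↥F, h' (x : V) = ((g x : V), f (g x)) := by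
    intro x
    have h1 : g' (x : V) = (g x : V) := hg'ext x
    have h2 : hh (g x : V) = f (g x) := (hhext (g x)).symm
    simp only [hh'def, h1, h2]
  refine ⟨fun x => ?_, ?_, h', hD, hhomD, hext⟩
  · show ((g x : V), f (g x)) ∈ Dset Bst
    rw [← hext x]
    exact hD x
  · ext y
    constructor
    · rintro ⟨x, rfl⟩
      exact (g x).2
    · intro hy
      obtain ⟨x, hx⟩ := hgbij.2 ⟨y, hy⟩
      refine ⟨x, ?_⟩
      show (g x : V) = y
      rw [hx]

lemma phi_surj [Fintype V] {Q : RelStr σ ar V} {F : Set V}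
    (hcore : IsCore (color Q F)) {Bst : RelStr (σ ⊕ V) (fullAr ar V) B}
    {h : ↥F → V × B} (hN : h ∈ N'set Q F Bst) :
    ∃ g ∈ Iset Q F, ∃ f ∈ FCset Q F Bst,
      h = fun x : ↥F => ((g x : V), f (g x)) := by
  obtain ⟨hD, hrange, h', hD', hhom', hext'⟩ := hN
  set e : V → V := fun v => (h' v).1 with hedef
  have hehom : IsHom Q Q e := by
    intro r t ht
    exact (hhom' r t ht).2.1
  have heF : ∀ x : ↥F, e (x : V) = (h x).1 := fun x => by rw [hedef]; simp [hext' x]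
  have hmapsto : ∀ x : ↥F, e (x : V) ∈ F := by
    intro x
    rw [heF x, ← hrange]
    exact ⟨x, rfl⟩
  have hsurjF : ∀ y ∈ F, ∃ x ∈ F, e x = y := by
    intro y hy
    rw [← hrange] at hy
    obtain ⟨x, hx⟩ := hy
    refine ⟨x, x.2, ?_⟩
    rw [heF x]
    exact hx
  have heaut : IsAut Q e := core_aut hcore hehom hmapsto hsurjF
  obtain ⟨hebij, _, einv, hei1, hei2, heinvhom⟩ := heaut
  set g : ↥F → ↥F := fun x => ⟨e x, hmapsto x⟩ with hgdef
  have hgI : g ∈ Iset Q F := ⟨e, ⟨hebij, hehom, einv, hei1, hei2, heinvhom⟩, fun x => rfl⟩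
  set hh : V → B := fun v => (h' (einv v)).2 with hhdef
  have hhhom : IsHom Q (tauReduct Bst) hh := by
    intro r t ht
    exact (hhom' r (einv ∘ t) (heinvhom r t ht)).2.2
  have hhcol : ∀ X : V, (fun _ : Fin 1 => hh X) ∈ Bst.rel (Sum.inr X) := by
    intro X
    have h1 : (h' (einv X)).1 = X := hei2 X
    have hmem : (fun _ : Fin 1 => (h' (einv X)).2) ∈
        Bst.rel (Sum.inr ((h' (einv X)).1)) := hD' (einv X)
    rw [h1] at hmem
    exact hmem
  set f : ↥F → B := fun x => hh (x : V) with hfdef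
  have hfFC : f ∈ FCset Q F Bst := ⟨hh, hhhom, hhcol, fun x => rfl⟩
  refine ⟨g, hgI, f, hfFC, ?_⟩
  funext x
  have h1 : (g x : V) = e (x : V) := rfl
  have h2 : f (g x) = (h' (einv (e (x : V)))).2 := rfl
  have h3 : einv (e (x : V)) = (x : V) := hei1 x
  rw [← hext' x]
  show h' (x : V) = ((g x : V), f (g x))
  rw [h2, h3, h1, heF x, ← hext' x]

end AuxProof

/-- If `color(Q)` is a core, then `|I| · |fullcolor(Q)(B)| = |N'|`. -/
theorem stmt8 {σ : Type} {ar : σ → ℕ} {V B : Type} [Fintype σ] [Fintype V] [Fintype B]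
    (Q : RelStr σ ar V) (F : Set V) (hcore : IsCore (color Q F))
    (Bst : RelStr (σ ⊕ V) (fullAr ar V) B) :
    (Iset Q F).ncard * (FCset Q F Bst).ncard = (N'set Q F Bst).ncard := by
  classical
  let Φ : ↥(Iset Q F) × ↥(FCset Q F Bst) → ↥(N'set Q F Bst) := fun p =>
    ⟨fun x => ((p.1.1 x : V), p.2.1 (p.1.1 x)), phi_mem p.1.2 p.2.2⟩
  have hbij : Function.Bijective Φ := by
    constructor
    · rintro ⟨⟨g₁, hg₁⟩, ⟨f₁, hf₁⟩⟩ ⟨⟨g₂, hg₂⟩, ⟨f₂, hf₂⟩⟩ heq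
      have heq' : ∀ x : ↥F, ((g₁ x : V), f₁ (g₁ x)) = ((g₂ x : V), f₂ (g₂ x)) := by
        intro x
        exact congrFun (congrArg Subtype.val heq) x
      have hgeq : g₁ = g₂ := by
        funext x
        exact Subtype.ext (congrArg Prod.fst (heq' x))
      have hg₁surj : Function.Surjective g₁ := by
        obtain ⟨g', hg'aut, hg'ext⟩ := hg₁
        have : Function.Injective g₁ := by
          intro x y hxy
          have : g' x = g' y := by rw [hg'ext x, hg'ext y, hxy]
          exact Subtype.ext (hg'aut.1.1 this)
        exact (Finite.injective_iff_bijective.mp this).2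
      have hfeq : f₁ = f₂ := by
        funext y
        obtain ⟨x, rfl⟩ := hg₁surj y
        have := congrArg Prod.snd (heq' x)
        simpa [hgeq] using this
      simp only [Prod.mk.injEq, Subtype.mk.injEq]
      exact ⟨hgeq, hfeq⟩
    · rintro ⟨h, hN⟩
      obtain ⟨g, hgI, f, hfFC, hhf⟩ := phi_surj hcore hN
      exact ⟨(⟨g, hgI⟩, ⟨f, hfFC⟩), Subtype.ext hhf.symm⟩
  have hcard : Nat.card (↥(Iset Q F) × ↥(FCset Q F Bst)) = Nat.card ↥(N'set Q F Bst) :=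
    Nat.card_eq_of_bijective Φ hbij
  rw [← Nat.card_coe_set_eq, ← Nat.card_coe_set_eq, ← Nat.card_coe_set_eq,
    ← Nat.card_prod, hcard]
end
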